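/- Suppose a, b, c are positive integers and the equation a·x² + b·y² = c has a solution in rational numbers. Then it has a rational solution (p/r, q/r) in lowest terms (gcd(p,q,r)=1) satisfying max(|p|,|q|,|r|) ≤ max(√(a·b), √(a·c), √(b·c)). -/

import Mathlib

lemma holzer_val (a b c x y z : ℤ) (ha : 0 < a) (hb : 0 < b) (hz : 0 < z)
    (heq : a*x^2 + b*y^2 = c*z^2)
    (hmin : ∀ X Y Z : ℤ, Z ≠ 0 → a*X^2 + b*Y^2 = c*Z^2 → z ≤ |Z|)
    (u v w : ℤ) (hne : ¬(u*z - w*x = 0 ∧ v*z - w*y = 0)) :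
    z^2 ≤ a*(u*z - w*x)^2 + b*(v*z - w*y)^2 := by
  set Pp := a*u*x + b*v*y - c*w*z with hPp
  set Qq := a*u^2 + b*v^2 - c*w^2 with hQq
  set Zz := Qq*z - 2*Pp*w with hZz'
  have hZz : Zz*z = a*(u*z - w*x)^2 + b*(v*z - w*y)^2 := by
    rw [hZz', hQq, hPp]; linear_combination (-w^2) * heq
  have hfpos : 0 < a*(u*z - w*x)^2 + b*(v*z - w*y)^2 := by
    rcases not_and_or.mp hne with h1 | h1
    · have h2 : 0 < (u*z - w*x)^2 := pow_two_pos_of_ne_zero h1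
      nlinarith [sq_nonneg (v*z - w*y)]
    · have h2 : 0 < (v*z - w*y)^2 := pow_two_pos_of_ne_zero h1
      nlinarith [sq_nonneg (u*z - w*x)]
  have hZ0 : Zz ≠ 0 := by
    intro h0; rw [h0, zero_mul] at hZz; linarith
  have hZpos : 0 < Zz := by
    by_contra hle
    push_neg at hle
    have : Zz*z ≤ 0 := mul_nonpos_of_nonpos_of_nonneg hle hz.le
    linarith
  have hsol : a*(Qq*x - 2*Pp*u)^2 + b*(Qq*y - 2*Pp*v)^2 = c*Zz^2 := by
    rw [hZz', hQq, hPp]; linear_combination (a*u^2 + b*v^2 - c*w^2)^2 * heq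
  have hge := hmin _ _ _ hZ0 hsol
  rw [abs_of_pos hZpos] at hge
  calc z^2 = z*z := sq z
    _ ≤ Zz*z := mul_le_mul_of_nonneg_right hge hz.le
    _ = _ := hZz

lemma holzer_val2 (a b c x y z : ℤ) (ha : 0 < a) (hb : 0 < b) (hz : 0 < z)
    (heq : a*x^2 + b*y^2 = c*z^2)
    (hmin : ∀ X Y Z : ℤ, Z ≠ 0 → a*X^2 + b*Y^2 = c*Z^2 → z ≤ |Z|)
    (u v w : ℤ) (hne : ¬(u*z - w*x = 0 ∧ v*z - w*y = 0))
    (hpar : 2 ∣ (a*u + b*v + c*w)) :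
    2*z^2 ≤ a*(u*z - w*x)^2 + b*(v*z - w*y)^2 := by
  set Pp := a*u*x + b*v*y - c*w*z with hPp
  set Qq := a*u^2 + b*v^2 - c*w^2 with hQq
  have hQ2 : 2 ∣ Qq := by
    obtain ⟨k, hk⟩ := hpar
    obtain ⟨α, hα⟩ : Even ((u-1)*(u-1+1)) := Int.even_mul_succ_self (u-1)
    obtain ⟨β, hβ⟩ : Even ((v-1)*(v-1+1)) := Int.even_mul_succ_self (v-1)
    obtain ⟨γ, hγ⟩ : Even (w*(w+1)) := Int.even_mul_succ_self w
    exact ⟨k + a*α + b*β - c*γ, by rw [hQq]; linear_combination hk + a*hα + b*hβ - c*hγ⟩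
  obtain ⟨q1, hq1⟩ := hQ2
  set X1 := q1*x - Pp*u with hX1
  set Y1 := q1*y - Pp*v with hY1
  set Z1 := q1*z - Pp*w with hZ1
  have hX : Qq*x - 2*Pp*u = 2*X1 := by rw [hX1]; linear_combination x * hq1
  have hY : Qq*y - 2*Pp*v = 2*Y1 := by rw [hY1]; linear_combination y * hq1
  have hZe : Qq*z - 2*Pp*w = 2*Z1 := by rw [hZ1]; linear_combination z * hq1
  have hZzQ : (Qq*z - 2*Pp*w)*z = a*(u*z - w*x)^2 + b*(v*z - w*y)^2 := by
    rw [hQq, hPp]; linear_combination (-w^2) * heq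
  rw [hZe] at hZzQ
  have hfpos : 0 < a*(u*z - w*x)^2 + b*(v*z - w*y)^2 := by
    rcases not_and_or.mp hne with h1 | h1
    · have h2 : 0 < (u*z - w*x)^2 := pow_two_pos_of_ne_zero h1
      nlinarith [sq_nonneg (v*z - w*y)]
    · have h2 : 0 < (v*z - w*y)^2 := pow_two_pos_of_ne_zero h1
      nlinarith [sq_nonneg (u*z - w*x)]
  have hZ0 : Z1 ≠ 0 := by
    intro h0; rw [h0] at hZzQ; simp at hZzQ; linarith
  have hZpos : 0 < Z1 := by
    by_contra hle
    push_neg at hle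
    have : (2*Z1)*z ≤ 0 := mul_nonpos_of_nonpos_of_nonneg (by linarith) hz.le
    linarith
  have hsolQ : a*(Qq*x - 2*Pp*u)^2 + b*(Qq*y - 2*Pp*v)^2 = c*(Qq*z - 2*Pp*w)^2 := by
    rw [hQq, hPp]; linear_combination (a*u^2 + b*v^2 - c*w^2)^2 * heq
  rw [hX, hY, hZe] at hsolQ
  have hsol : a*X1^2 + b*Y1^2 = c*Z1^2 := by
    have h4 : (4:ℤ) * (a*X1^2 + b*Y1^2) = 4 * (c*Z1^2) := by linear_combination hsolQ
    exact mul_left_cancel₀ (by norm_num) h4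
  have hge := hmin _ _ _ hZ0 hsol
  rw [abs_of_pos hZpos] at hge
  calc 2*z^2 = (2*z)*z := by ring
    _ ≤ (2*Z1)*z := by
        have : 2*z ≤ 2*Z1 := by linarith
        exact mul_le_mul_of_nonneg_right this hz.le
    _ = _ := hZzQ

lemma holzer_endineq (m A B C : ℤ) (hm : 0 < m) (hA : m ≤ A) (hAC : A ≤ C)
    (hBA : |B| ≤ A) (hcase : 2*m ≤ C ∨ 2*m ≤ A - |B| + C) :
    4*m^2 ≤ 4*A*C - B^2 := by
  have hB2 : B^2 = |B|^2 := (sq_abs B).symm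
  have hβ0 : 0 ≤ |B| := abs_nonneg B
  rcases hcase with hc | hc
  · -- 2m ≤ C
    have hQ1 : 0 ≤ (A - |B|)*(A + |B|) := mul_nonneg (by linarith) (by linarith)
    have hQ2 : 0 ≤ A*(C - A) := mul_nonneg (by linarith) (by linarith)
    have hQ3 : 0 ≤ (A - m)*C := mul_nonneg (by linarith) (by linarith)
    have hQ4 : 0 ≤ m*(C - 2*m) := mul_nonneg (by linarith) (by linarith)
    nlinarith [hQ1, hQ2, hQ3, hQ4, mul_pos hm hm]
  · rcases le_or_gt (|B|) (2*(A - m)) with h1 | h1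
    · have hR1 : 0 ≤ A*(C - A) := mul_nonneg (by linarith) (by linarith)
      have hR2 : 0 ≤ (2*A - |B| - 2*m)*(2*A + |B| - 2*m) :=
        mul_nonneg (by linarith) (by linarith)
      have hR3 : 0 ≤ m*(A - m) := mul_nonneg (by linarith) (by linarith)
      nlinarith [hR1, hR2, hR3]
    · have hP1 : 0 ≤ (|B| - 2*(A - m))*(2*A + 2*m - |B|) :=
        mul_nonneg (by linarith) (by linarith)
      have hP2 : 0 ≤ A*(A + C - |B| - 2*m) := mul_nonneg (by linarith) (by linarith)
      have hP3 : 0 ≤ m*(A - m) := mul_nonneg (by linarith) (by linarith)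
      nlinarith [hP1, hP2, hP3]

lemma holzer_key (m AB : ℤ) (hm : 0 < m) :
    ∀ N : ℕ, ∀ A B C p q : ℤ, A.toNat ≤ N →
    4*A*C - B^2 = 4*AB*m →
    (∀ s t : ℤ, ¬(s = 0 ∧ t = 0) → m ≤ A*s^2 + B*(s*t) + C*t^2) →
    (∀ s t : ℤ, ¬(s = 0 ∧ t = 0) → 2 ∣ (p*s + q*t) → 2*m ≤ A*s^2 + B*(s*t) + C*t^2) →
    m ≤ AB := by
  intro N
  induction N with
  | zero =>
    intro A B C p q hN hdisc hval hval2
    exfalso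
    have hA : m ≤ A := by simpa using hval 1 0 (by simp)
    have : A.toNat = 0 := Nat.le_zero.mp hN
    have : A ≤ 0 := by omega
    linarith
  | succ N ih =>
    intro A B C p q hN hdisc hval hval2
    have hA : m ≤ A := by simpa using hval 1 0 (by simp)
    have hA0 : 0 < A := lt_of_lt_of_le hm hA
    -- translation step
    set k := (B + A) / (2*A) with hk
    set n := -k with hn
    have h2A0 : (0:ℤ) < 2*A := by linarith
    have hmod1 : 0 ≤ (B + A) % (2*A) := Int.emod_nonneg _ (by linarith)
    have hmod2 : (B + A) % (2*A) < 2*A := Int.emod_lt_of_pos _ h2A0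
    have hdm : 2*A * k + (B + A) % (2*A) = B + A := Int.mul_ediv_add_emod (B + A) (2*A)
    set B' := B + 2*A*n with hB'
    have hB'eq : B' = (B + A) % (2*A) - A := by
      rw [hB', hn]; linear_combination -hdm
    have hB'lb : -A ≤ B' := by rw [hB'eq]; linarith
    have hB'ub : B' ≤ A := by rw [hB'eq]; linarith
    have hB'A : |B'| ≤ A := abs_le.mpr ⟨hB'lb, hB'ub⟩
    set C' := A*n^2 + B*n + C with hC'
    set q' := p*n + q with hq'
    -- transported hypotheses
    have hval' : ∀ s t : ℤ, ¬(s = 0 ∧ t = 0) → m ≤ A*s^2 + B'*(s*t) + C'*t^2 := by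
      intro s t hst
      have hne : ¬(s + n*t = 0 ∧ t = 0) := by
        rintro ⟨h1, h2⟩; exact hst ⟨by rw [h2] at h1; simpa using h1, h2⟩
      have := hval (s + n*t) t hne
      have heq2 : A*(s + n*t)^2 + B*((s + n*t)*t) + C*t^2
          = A*s^2 + B'*(s*t) + C'*t^2 := by rw [hB', hC']; ring
      linarith [heq2 ▸ this]
    have hval2' : ∀ s t : ℤ, ¬(s = 0 ∧ t = 0) → 2 ∣ (p*s + q'*t) →
        2*m ≤ A*s^2 + B'*(s*t) + C'*t^2 := by
      intro s t hst hpar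
      have hne : ¬(s + n*t = 0 ∧ t = 0) := by
        rintro ⟨h1, h2⟩; exact hst ⟨by rw [h2] at h1; simpa using h1, h2⟩
      have hpar' : 2 ∣ (p*(s + n*t) + q*t) := by
        have : p*(s + n*t) + q*t = p*s + q'*t := by rw [hq']; ring
        rw [this]; exact hpar
      have := hval2 (s + n*t) t hne hpar'
      have heq2 : A*(s + n*t)^2 + B*((s + n*t)*t) + C*t^2
          = A*s^2 + B'*(s*t) + C'*t^2 := by rw [hB', hC']; ring
      linarith [heq2 ▸ this]
    have hdisc' : 4*A*C' - B'^2 = 4*AB*m := by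
      rw [hB', hC']; linear_combination hdisc
    by_cases hswap : C' < A
    · -- swap and recurse
      have hC'm : m ≤ C' := by simpa using hval' 0 1 (by simp)
      have hC'0 : 0 < C' := lt_of_lt_of_le hm hC'm
      have htn : C'.toNat ≤ N := by omega
      apply ih C' B' A q' p htn
      · linear_combination hdisc'
      · intro s t hst
        have hne : ¬(t = 0 ∧ s = 0) := fun ⟨h1, h2⟩ => hst ⟨h2, h1⟩
        have := hval' t s hne
        linarith [this, show A*t^2 + B'*(t*s) + C'*s^2 = C'*s^2 + B'*(s*t) + A*t^2 from by ring]
      · intro s t hst hpar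
        have hne : ¬(t = 0 ∧ s = 0) := fun ⟨h1, h2⟩ => hst ⟨h2, h1⟩
        have hpar' : 2 ∣ (p*t + q'*s) := by
          have : p*t + q'*s = q'*s + p*t := by ring
          rw [this]; exact hpar
        have := hval2' t s hne hpar'
        linarith [this, show A*t^2 + B'*(t*s) + C'*s^2 = C'*s^2 + B'*(s*t) + A*t^2 from by ring]
    · -- reduced: endgame
      push_neg at hswap
      have hC'm : m ≤ C' := by simpa using hval' 0 1 (by simp)
      have hcase : 2*m ≤ C' ∨ 2*m ≤ A - |B'| + C' := by
        rcases Int.even_or_odd p with hp | hp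
        · -- p even ⇒ A ≥ 2m ⇒ C' ≥ 2m
          have h2 : 2 ∣ (p*1 + q'*0) := by simpa using hp.two_dvd
          have := hval2' 1 0 (by simp) h2
          left; simp at this; linarith
        · rcases Int.even_or_odd q' with hq | hq
          · have h2 : 2 ∣ (p*0 + q'*1) := by simpa using hq.two_dvd
            have := hval2' 0 1 (by simp) h2
            left; simpa using this
          · -- both odd
            right
            set t : ℤ := if 0 ≤ B' then -1 else 1 with ht
            have ht2 : t^2 = 1 := by rw [ht]; split <;> norm_num
            have hBt : B'*t = -|B'| := by
              rw [ht]; split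
              · rw [abs_of_nonneg (by assumption)]; ring
              · rw [abs_of_neg (by linarith [not_le.mp (by assumption)])]; ring
            have htodd : Odd t := by rw [ht]; split <;> decide
            have hpar : 2 ∣ (p*1 + q'*t) := by
              simpa using (hp.add_odd (hq.mul htodd)).two_dvd
            have hne : ¬((1:ℤ) = 0 ∧ t = 0) := by rintro ⟨h1, -⟩; exact one_ne_zero h1
            have := hval2' 1 t hne hpar
            have hval_eq : A*1^2 + B'*(1*t) + C'*t^2 = A - |B'| + C' := by
              rw [show B'*(1*t) = B'*t from by ring, hBt, ht2]; ring
            linarith [hval_eq ▸ this]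
      have hfin : 4*m^2 ≤ 4*A*C' - B'^2 :=
        holzer_endineq m A B' C' hm hA hswap hB'A hcase
      rw [hdisc'] at hfin
      nlinarith [hfin, hm]

lemma holzer_zsq_le (a b c x y z : ℤ) (ha : 0 < a) (hb : 0 < b) (hz : 0 < z)
    (heq : a*x^2 + b*y^2 = c*z^2)
    (hmin : ∀ X Y Z : ℤ, Z ≠ 0 → a*X^2 + b*Y^2 = c*Z^2 → z ≤ |Z|)
    (hgcd : Int.gcd (Int.gcd x y) z = 1) :
    z^2 ≤ a*b := by
  set d : ℤ := (Int.gcd x z : ℤ) with hd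
  have hd0 : 0 < d := by
    rw [hd]
    exact_mod_cast Nat.pos_of_ne_zero (fun h0 => by
      have := Int.gcd_eq_zero_iff.mp h0
      exact hz.ne' this.2)
  have hbez : d = x * Int.gcdA x z + z * Int.gcdB x z := Int.gcd_eq_gcd_ab x z
  set s0 := Int.gcdA x z with hs0
  set t0 := Int.gcdB x z with ht0
  obtain ⟨x1, hx1⟩ : d ∣ x := Int.gcd_dvd_left x z
  obtain ⟨z1, hz1⟩ : d ∣ z := Int.gcd_dvd_right x z
  have hz1pos : 0 < z1 := by
    rcases lt_trichotomy z1 0 with h | h | h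
    · nlinarith
    · rw [h, mul_zero] at hz1; exact absurd hz1 hz.ne'
    · exact h
  -- gcd(d, y) = 1
  have hdy : Int.gcd d y = 1 := by
    set k := Int.gcd d y with hk
    have hk1 : (k:ℤ) ∣ x := dvd_trans (Int.gcd_dvd_left d y) ⟨x1, hx1⟩
    have hk2 : (k:ℤ) ∣ y := Int.gcd_dvd_right d y
    have hk3 : (k:ℤ) ∣ z := dvd_trans (Int.gcd_dvd_left d y) ⟨z1, hz1⟩
    have : (k:ℤ) ∣ ((Int.gcd (Int.gcd x y) z : ℕ) : ℤ) :=
      Int.dvd_coe_gcd (Int.dvd_coe_gcd hk1 hk2) hk3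
    rw [hgcd] at this
    have : k ∣ 1 := by exact_mod_cast this
    exact Nat.dvd_one.mp this
  have hbez2 : (1:ℤ) = d * Int.gcdA d y + y * Int.gcdB d y := by
    have := Int.gcd_eq_gcd_ab d y
    rw [hdy] at this
    exact_mod_cast this
  set e1 := Int.gcdA d y with he1
  set e2 := Int.gcdB d y with he2
  have hlam1 : ∀ s t : ℤ, (s*t0 - t*e2*x1)*z - (-(s*s0) - t*e2*z1)*x = s*d := by
    intro s t
    linear_combination (-s)*hbez + (t*e2*z1)*hx1 + (-(t*e2*x1))*hz1
  have hlam2 : ∀ s t : ℤ, (t*e1)*z - (-(s*s0) - t*e2*z1)*y = s*(s0*y) + t*z1 := by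
    intro s t
    linear_combination (t*e1)*hz1 + (-(t*z1))*hbez2
  have hm : (0:ℤ) < z^2 := by positivity
  refine holzer_key (z^2) (a*b) hm (a*d^2 + b*(s0*y)^2).toNat
    (a*d^2 + b*(s0*y)^2) (2*(b*(s0*y)*z1)) (b*z1^2)
    (a*t0 - c*s0) (-(a*e2*x1) + b*e1 - c*e2*z1) le_rfl ?_ ?_ ?_
  · -- disc
    linear_combination (-(4*a*b*(z + d*z1)))*hz1
  · -- values
    intro s t hst
    have hne : ¬((s*t0 - t*e2*x1)*z - (-(s*s0) - t*e2*z1)*x = 0 ∧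
        (t*e1)*z - (-(s*s0) - t*e2*z1)*y = 0) := by
      rw [hlam1, hlam2]
      rintro ⟨h1, h2⟩
      have hs : s = 0 := by
        rcases mul_eq_zero.mp h1 with h | h
        · exact h
        · exact absurd h hd0.ne'
      rw [hs] at h2
      simp at h2
      rcases h2 with h | h
      · exact hst ⟨hs, h⟩
      · exact absurd h hz1pos.ne'
    have hv := holzer_val a b c x y z ha hb hz heq hmin
      (s*t0 - t*e2*x1) (t*e1) (-(s*s0) - t*e2*z1) hne
    rw [hlam1, hlam2] at hv
    calc z^2 ≤ a*(s*d)^2 + b*(s*(s0*y) + t*z1)^2 := hv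
      _ = (a*d^2 + b*(s0*y)^2)*s^2 + (2*(b*(s0*y)*z1))*(s*t) + (b*z1^2)*t^2 := by ring
  · -- parity values
    intro s t hst hpar
    have hne : ¬((s*t0 - t*e2*x1)*z - (-(s*s0) - t*e2*z1)*x = 0 ∧
        (t*e1)*z - (-(s*s0) - t*e2*z1)*y = 0) := by
      rw [hlam1, hlam2]
      rintro ⟨h1, h2⟩
      have hs : s = 0 := by
        rcases mul_eq_zero.mp h1 with h | h
        · exact h
        · exact absurd h hd0.ne'
      rw [hs] at h2
      simp at h2
      rcases h2 with h | h
      · exact hst ⟨hs, h⟩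
      · exact absurd h hz1pos.ne'
    have hpar' : 2 ∣ (a*(s*t0 - t*e2*x1) + b*(t*e1) + c*(-(s*s0) - t*e2*z1)) := by
      have heq2 : a*(s*t0 - t*e2*x1) + b*(t*e1) + c*(-(s*s0) - t*e2*z1)
          = (a*t0 - c*s0)*s + (-(a*e2*x1) + b*e1 - c*e2*z1)*t := by ring
      rw [heq2]; exact hpar
    have hv := holzer_val2 a b c x y z ha hb hz heq hmin
      (s*t0 - t*e2*x1) (t*e1) (-(s*s0) - t*e2*z1) hne hpar'
    rw [hlam1, hlam2] at hv
    calc 2*z^2 ≤ a*(s*d)^2 + b*(s*(s0*y) + t*z1)^2 := hv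
      _ = (a*d^2 + b*(s0*y)^2)*s^2 + (2*(b*(s0*y)*z1))*(s*t) + (b*z1^2)*t^2 := by ring

lemma holzer_ratsol (a b c : ℤ) (x y : ℚ) (h : (a:ℚ)*x^2 + (b:ℚ)*y^2 = (c:ℚ)) :
    ∃ X Y Z : ℤ, 0 < Z ∧ a*X^2 + b*Y^2 = c*Z^2 := by
  refine ⟨x.num * y.den, y.num * x.den, (x.den : ℤ) * (y.den : ℤ), ?_, ?_⟩
  · have h1 : 0 < (x.den : ℤ) := by exact_mod_cast x.pos
    have h2 : 0 < (y.den : ℤ) := by exact_mod_cast y.pos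
    exact mul_pos h1 h2
  · have hxd : ((x.den : ℚ)) ≠ 0 := by
      have : 0 < (x.den : ℚ) := by exact_mod_cast x.pos
      exact this.ne'
    have hyd : ((y.den : ℚ)) ≠ 0 := by
      have : 0 < (y.den : ℚ) := by exact_mod_cast y.pos
      exact this.ne'
    have hx : (x.num : ℚ) = x * (x.den : ℚ) := (div_eq_iff hxd).mp (Rat.num_div_den x)
    have hy : (y.num : ℚ) = y * (y.den : ℚ) := (div_eq_iff hyd).mp (Rat.num_div_den y)
    have hq : (a:ℚ)*((x.num : ℚ)*(y.den:ℚ))^2 + (b:ℚ)*((y.num:ℚ)*(x.den:ℚ))^2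
        = (c:ℚ)*((x.den:ℚ)*(y.den:ℚ))^2 := by
      rw [hx, hy]
      linear_combination ((x.den:ℚ)*(y.den:ℚ))^2 * h
    exact_mod_cast hq

/-- Holzer's theorem: if `a, b, c` are positive integers and
`a·x² + b·y² = c` has a rational solution, then it has a rational solution
`(p/r, q/r)` in lowest terms (`gcd(p,q,r) = 1`, `r > 0`) with
`max(|p|,|q|,|r|) ≤ max(√(ab), √(ac), √(bc))`. -/
theorem stmt_15 (a b c : ℤ) (ha : 0 < a) (hb : 0 < b) (hc : 0 < c)
    (h : ∃ x y : ℚ, (a : ℚ) * x ^ 2 + (b : ℚ) * y ^ 2 = c) :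
    ∃ p q r : ℤ, 0 < r ∧ Int.gcd (Int.gcd p q) r = 1 ∧
      (a : ℚ) * ((p : ℚ) / r) ^ 2 + (b : ℚ) * ((q : ℚ) / r) ^ 2 = c ∧
      (max (max |p| |q|) |r| : ℝ) ≤
        max (max (Real.sqrt ((a : ℝ) * b)) (Real.sqrt ((a : ℝ) * c)))
          (Real.sqrt ((b : ℝ) * c)) := by
  classical
  obtain ⟨x0, y0, hxy⟩ := h
  obtain ⟨X0, Y0, Z0, hZ0pos, hsol0⟩ := holzer_ratsol a b c x0 y0 hxy
  set Pn : ℕ → Prop := fun n => 0 < n ∧ ∃ X Y : ℤ, a*X^2 + b*Y^2 = c*(n:ℤ)^2 with hPn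
  have hPne : ∃ n, Pn n := by
    refine ⟨Z0.toNat, by omega, X0, Y0, ?_⟩
    rw [Int.toNat_of_nonneg hZ0pos.le]
    exact hsol0
  set n0 := Nat.find hPne with hn0
  obtain ⟨hn0pos, X, Y, hsol⟩ := Nat.find_spec hPne
  set z : ℤ := (n0 : ℤ) with hzdef
  have hzpos : 0 < z := by
    have h0 : 0 < n0 := hn0pos
    rw [hzdef]; exact_mod_cast h0
  have hmin : ∀ X' Y' Z' : ℤ, Z' ≠ 0 → a*X'^2 + b*Y'^2 = c*Z'^2 → z ≤ |Z'| := by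
    intro X' Y' Z' hZ' hsol'
    have habs : ((Z'.natAbs : ℤ))^2 = Z'^2 := by
      rw [Int.natAbs_sq]  -- may need fixing
    have hPm : Pn Z'.natAbs := by
      refine ⟨Int.natAbs_pos.mpr hZ', X', Y', ?_⟩
      rw [habs]; exact hsol'
    have h2 : n0 ≤ Z'.natAbs := Nat.find_min' hPne hPm
    rw [hzdef, Int.abs_eq_natAbs]
    exact_mod_cast h2
  -- gcd(X, Y, z) = 1
  have hgcd : Int.gcd (Int.gcd X Y) z = 1 := by
    by_contra hg1
    set g := Int.gcd (Int.gcd X Y : ℤ) z with hg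
    have hgdvdz : (g:ℤ) ∣ z := Int.gcd_dvd_right _ _
    have hgpos : 0 < g := by
      rcases Nat.eq_zero_or_pos g with h0 | h0
      · exfalso
        have := Int.gcd_eq_zero_iff.mp h0
        exact hzpos.ne' this.2
      · exact h0
    have hg2 : 2 ≤ g := by omega
    have hgX : (g:ℤ) ∣ X := dvd_trans (Int.gcd_dvd_left _ _) (Int.gcd_dvd_left _ _)
    have hgY : (g:ℤ) ∣ Y := dvd_trans (Int.gcd_dvd_left _ _) (Int.gcd_dvd_right _ _)
    obtain ⟨X1, hX1⟩ := hgX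
    obtain ⟨Y1, hY1⟩ := hgY
    have hgn : g ∣ n0 := by
      rw [hzdef] at hgdvdz
      exact_mod_cast hgdvdz
    obtain ⟨n1, hn1⟩ := hgn
    have hn1pos : 0 < n1 := by
      rcases Nat.eq_zero_or_pos n1 with h0 | h0
      · exfalso
        subst h0
        simp at hn1
        have h0' : 0 < n0 := hn0pos
        omega
      · exact h0
    have hsol1 : a*X1^2 + b*Y1^2 = c*(n1:ℤ)^2 := by
      have hcan : (g:ℤ)^2 * (a*X1^2 + b*Y1^2) = (g:ℤ)^2 * (c*(n1:ℤ)^2) := by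
        have hzz : z = (g:ℤ) * (n1:ℤ) := by rw [hzdef, hn1]; push_cast; ring
        calc (g:ℤ)^2 * (a*X1^2 + b*Y1^2) = a*X^2 + b*Y^2 := by rw [hX1, hY1]; ring
          _ = c*z^2 := hsol
          _ = (g:ℤ)^2 * (c*(n1:ℤ)^2) := by rw [hzz]; ring
      have hgne : ((g:ℤ)^2) ≠ 0 := by positivity
      exact mul_left_cancel₀ hgne hcan
    have hle : n0 ≤ n1 := Nat.find_min' hPne (⟨hn1pos, X1, Y1, hsol1⟩ : Pn n1)
    have h4 : 2*n1 ≤ g*n1 := Nat.mul_le_mul_right n1 hg2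
    rw [← hn1] at h4
    omega
  have hzab : z^2 ≤ a*b := holzer_zsq_le a b c X Y z ha hb hzpos hsol hmin hgcd
  -- bounds
  have hX2 : X^2 ≤ b*c := by
    have h1 : a*X^2 ≤ c*z^2 := by nlinarith [sq_nonneg Y, mul_nonneg hb.le (sq_nonneg Y)]
    have h2 : c*z^2 ≤ c*(a*b) := by nlinarith
    nlinarith
  have hY2 : Y^2 ≤ a*c := by
    have h1 : b*Y^2 ≤ c*z^2 := by nlinarith [mul_nonneg ha.le (sq_nonneg X)]
    have h2 : c*z^2 ≤ c*(a*b) := by nlinarith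
    nlinarith
  refine ⟨X, Y, z, hzpos, hgcd, ?_, ?_⟩
  · have hzq : ((z:ℚ)) ≠ 0 := by
      have : (0:ℚ) < (z:ℚ) := by exact_mod_cast hzpos
      exact this.ne'
    have hq : (a:ℚ)*(X:ℚ)^2 + (b:ℚ)*(Y:ℚ)^2 = (c:ℚ)*(z:ℚ)^2 := by exact_mod_cast hsol
    field_simp
    linear_combination hq
  · have habs : ((max (max |X| |Y|) |z| : ℤ) : ℝ)
        = max (max (|X| : ℝ) (|Y| : ℝ)) (|z| : ℝ) := by
      push_cast [Int.cast_max]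
      rfl
    have bX : |(X:ℝ)| ≤ Real.sqrt ((b:ℝ)*c) := by
      rw [← Real.sqrt_sq_eq_abs]
      apply Real.sqrt_le_sqrt
      exact_mod_cast hX2
    have bY : |(Y:ℝ)| ≤ Real.sqrt ((a:ℝ)*c) := by
      rw [← Real.sqrt_sq_eq_abs]
      apply Real.sqrt_le_sqrt
      exact_mod_cast hY2
    have bz : |(z:ℝ)| ≤ Real.sqrt ((a:ℝ)*b) := by
      rw [← Real.sqrt_sq_eq_abs]
      apply Real.sqrt_le_sqrt
      exact_mod_cast hzab
    refine max_le (max_le ?_ ?_) ?_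
    · exact le_trans bX (le_max_right _ _)
    · exact le_trans bY (le_trans (le_max_right _ _) (le_max_left _ _))
    · exact le_trans bz (le_trans (le_max_left _ _) (le_max_left _ _))
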